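/- Let $\mathbf{u} \in H^1([0,1], \mathbb{R}^n)$ minimize the energy $E$ over the admissible set $\mathcal{A}$ of curves from $p$ to $q$ avoiding a bounded convex open obstacle $\mathcal{O}$ with smooth boundary. Then on each connected component of the open set $\Omega = \{t \in [0,1] : \mathbf{u}(t) \notin \overline{\mathcal{O}}\}$, the curve $\mathbf{u}$ is affine (i.e., $\mathbf{u}'' = 0$ in the distributional sense, so $\mathbf{u}$ restricted to each such component is a straight line segment). -/

import Mathlib

open MeasureTheory Set
open scoped RealInnerProductSpace

/-- `u` is an `H¹` curve on `[0,1]` with weak derivative `u'`: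
it is continuous, `u'` is in `L²`, and `u` is the indefinite integral of `u'`. -/
def IsH1Curve (n : ℕ) (u u' : ℝ → EuclideanSpace ℝ (Fin n)) : Prop :=
  ContinuousOn u (Icc 0 1) ∧
  MemLp u' 2 (volume.restrict (Icc (0:ℝ) 1)) ∧
  ∀ t ∈ Icc (0:ℝ) 1, u t = u 0 + ∫ s in (0:ℝ)..t, u' s

/-- Dirichlet energy of a curve with derivative `u'`. -/
noncomputable def energy (n : ℕ) (u' : ℝ → EuclideanSpace ℝ (Fin n)) : ℝ :=
  ∫ t in (0:ℝ)..1, ‖u' t‖ ^ 2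

/-- Arc length of a curve with derivative `u'`. -/
noncomputable def arcLength (n : ℕ) (u' : ℝ → EuclideanSpace ℝ (Fin n)) : ℝ :=
  ∫ t in (0:ℝ)..1, ‖u' t‖

/-- The admissible class: `H¹` curves from `p` to `q` avoiding the obstacle `O`. -/
def Admissible (n : ℕ) (O : Set (EuclideanSpace ℝ (Fin n)))
    (p q : EuclideanSpace ℝ (Fin n)) (u u' : ℝ → EuclideanSpace ℝ (Fin n)) : Prop :=
  IsH1Curve n u u' ∧ u 0 = p ∧ u 1 = q ∧ ∀ t ∈ Icc (0:ℝ) 1, u t ∉ O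

/-- `O` has smooth boundary: it is the sublevel set of a smooth defining function
with nonvanishing gradient on the boundary. -/
def HasSmoothBoundary (n : ℕ) (O : Set (EuclideanSpace ℝ (Fin n))) : Prop :=
  ∃ f : EuclideanSpace ℝ (Fin n) → ℝ, ContDiff ℝ (⊤ : ℕ∞) f ∧ O = {x | f x < 0} ∧
    frontier O = {x | f x = 0} ∧ ∀ x ∈ frontier O, fderiv ℝ f x ≠ 0

set_option maxHeartbeats 1000000 in
/-- A minimizer is affine (a straight segment) on any interval where it
stays away from the closed obstacle. -/
theorem minimizer_affine_off_obstacle (n : ℕ)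
    (O : Set (EuclideanSpace ℝ (Fin n))) (hObd : Bornology.IsBounded O)
    (hOconv : Convex ℝ O) (hOopen : IsOpen O) (hOsm : HasSmoothBoundary n O)
    (p q : EuclideanSpace ℝ (Fin n)) (hp : p ∉ closure O) (hq : q ∉ closure O)
    (u u' : ℝ → EuclideanSpace ℝ (Fin n))
    (hu : Admissible n O p q u u')
    (hmin : ∀ v v', Admissible n O p q v v' → energy n u' ≤ energy n v')
    (c d : ℝ) (hcd : c < d) (hsub : Icc c d ⊆ Icc 0 1)
    (havoid : ∀ t ∈ Icc c d, u t ∉ closure O) :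
    ∀ t ∈ Icc c d, u t = u c + ((t - c) / (d - c)) • (u d - u c) := by
  classical
  obtain ⟨⟨hucont, hu'L2, huint⟩, hu0, hu1, huO⟩ := hu
  haveI : IsFiniteMeasure (volume.restrict (Icc (0:ℝ) 1)) := ⟨by simp [Real.volume_Icc]⟩
  have hc0 : (0:ℝ) ≤ c := (hsub ⟨le_rfl, hcd.le⟩).1
  have hd1 : d ≤ 1 := (hsub ⟨hcd.le, le_rfl⟩).2
  -- integrability facts
  have hu'int : IntegrableOn u' (Icc (0:ℝ) 1) :=
    (hu'L2.mono_exponent (by norm_num)).integrable le_rfl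
  have hII : ∀ x y : ℝ, 0 ≤ x → x ≤ y → y ≤ 1 → IntervalIntegrable u' volume x y := by
    intro x y hx hxy hy
    have h : IntegrableOn u' (uIcc x y) := by
      rw [uIcc_of_le hxy]
      exact hu'int.mono_set (Icc_subset_Icc hx hy)
    exact h.intervalIntegrable
  have hdiff : ∀ x y : ℝ, 0 ≤ x → x ≤ y → y ≤ 1 →
      u y - u x = ∫ s in Ioc x y, u' s := by
    intro x y hx hxy hy
    have h1 := huint x ⟨hx, hxy.trans hy⟩
    have h2 := huint y ⟨hx.trans hxy, hy⟩
    rw [← intervalIntegral.integral_of_le hxy,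
      ← intervalIntegral.integral_interval_sub_left (hII 0 y (le_rfl) (hx.trans hxy) hy)
        (hII 0 x le_rfl hx (hxy.trans hy))]
    rw [h1, h2]; abel
  have hnsq : IntegrableOn (fun t => ‖u' t‖ ^ 2) (Icc (0:ℝ) 1) := by
    have := hu'L2.integrable_norm_rpow (by norm_num) (by norm_num)
    simpa [ENNReal.toReal_ofNat, Real.rpow_natCast, IntegrableOn] using this
  -- positive distance ρ from the curve on [c,d] to the obstacle
  obtain ⟨ρ, hρpos, hρ⟩ : ∃ ρ > 0, ∀ s ∈ Icc c d, ∀ y ∈ closure O, ρ ≤ dist (u s) y := by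
    rcases eq_empty_or_nonempty (closure O) with hO | hO
    · exact ⟨1, one_pos, fun s _ y hy => by rw [hO] at hy; exact absurd hy (notMem_empty y)⟩
    · have hucd : ContinuousOn u (Icc c d) := hucont.mono hsub
      have hφ : ContinuousOn (fun t => Metric.infDist (u t) (closure O)) (Icc c d) :=
        (Metric.continuous_infDist_pt (closure O)).comp_continuousOn hucd
      obtain ⟨t0, ht0, hmin0⟩ := isCompact_Icc.exists_isMinOn ⟨c, le_rfl, hcd.le⟩ hφ
      refine ⟨Metric.infDist (u t0) (closure O), ?_, ?_⟩
      · exact (isClosed_closure.notMem_iff_infDist_pos hO).mp (havoid t0 ht0)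
      · intro s hs y hy
        exact le_trans (hmin0 hs) (Metric.infDist_le_dist_of_mem hy)
  -- the key lemma : on short subintervals the derivative is a.e. the mean slope
  have key : ∀ a b : ℝ, c ≤ a → a < b → b ≤ d → dist (u b) (u a) < ρ →
      (∀ᵐ t ∂(volume.restrict (Ioc a b)), u' t = (b - a)⁻¹ • (u b - u a)) := by
    intro a b hca hab hbd hdist
    have ha0 : (0:ℝ) ≤ a := hc0.trans hca
    have hb1 : b ≤ 1 := hbd.trans hd1
    have hba : (0:ℝ) < b - a := sub_pos.mpr hab
    set m : EuclideanSpace ℝ (Fin n) := (b - a)⁻¹ • (u b - u a) with hm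
    have hsmul : (b - a) • m = u b - u a := by
      rw [hm, smul_smul, mul_inv_cancel₀ hba.ne', one_smul]
    set w : ℝ → EuclideanSpace ℝ (Fin n) := (Ioc a b).indicator (fun s => m - u' s) with hw
    set v' : ℝ → EuclideanSpace ℝ (Fin n) := fun s => u' s + w s with hv'
    set v : ℝ → EuclideanSpace ℝ (Fin n) := fun t => u 0 + ∫ s in (0:ℝ)..t, v' s with hv
    have hwi : IntegrableOn w (Icc (0:ℝ) 1) :=
      ((integrable_const m).sub hu'int).indicator measurableSet_Ioc
    have hv'i : IntegrableOn v' (Icc (0:ℝ) 1) := hu'int.add hwi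
    have hIab : ∫ s in Ioc a b, u' s = u b - u a := (hdiff a b ha0 hab.le hb1).symm
    have hconstInt : ∀ x y : ℝ, IntegrableOn (fun _ : ℝ => m) (Ioc x y) := by
      intro x y
      exact integrableOn_const (by simp [Real.volume_Ioc])
    have hIab0 : ∫ s in Ioc a b, (m - u' s) = 0 := by
      rw [integral_sub (hconstInt a b) (hu'int.mono_set (Ioc_subset_Icc_self.trans (Icc_subset_Icc ha0 hb1)))]
      rw [setIntegral_const, Real.volume_real_Ioc_of_le hab.le, hsmul, hIab, sub_self]
    -- formula for v
    have hveq : ∀ t : ℝ, 0 ≤ t → t ≤ 1 →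
        v t = u t + ∫ s in Ioc 0 t ∩ Ioc a b, (m - u' s) := by
      intro t ht0 ht1
      have h1 : IntervalIntegrable w volume 0 t := by
        have h : IntegrableOn w (uIcc 0 t) := by
          rw [uIcc_of_le ht0]; exact hwi.mono_set (Icc_subset_Icc le_rfl ht1)
        exact h.intervalIntegrable
      have h2 := hII 0 t le_rfl ht0 ht1
      have : v t = u 0 + ((∫ s in (0:ℝ)..t, u' s) + ∫ s in (0:ℝ)..t, w s) := by
        rw [hv]; simp only; rw [intervalIntegral.integral_add h2 h1]
      rw [this, ← add_assoc, ← huint t ⟨ht0, ht1⟩,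
        intervalIntegral.integral_of_le ht0, hw, setIntegral_indicator measurableSet_Ioc]
    have hvle : ∀ t : ℝ, 0 ≤ t → t ≤ a → v t = u t := by
      intro t ht0 hta
      rw [hveq t ht0 (hta.trans (hab.le.trans hb1))]
      have : Ioc 0 t ∩ Ioc a b = ∅ := by
        ext s
        simp only [mem_inter_iff, mem_Ioc, mem_empty_iff_false, iff_false]
        rintro ⟨⟨_, h2⟩, ⟨h3, _⟩⟩; linarith
      rw [this, setIntegral_empty, add_zero]
    have hvmid : ∀ t : ℝ, a ≤ t → t ≤ b → v t = u a + (t - a) • m := by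
      intro t hta htb
      rw [hveq t (ha0.trans hta) (htb.trans hb1)]
      have hset : Ioc 0 t ∩ Ioc a b = Ioc a t := by
        ext s; simp only [mem_inter_iff, mem_Ioc]
        constructor
        · rintro ⟨⟨_, h2⟩, ⟨h3, _⟩⟩; exact ⟨h3, h2⟩
        · rintro ⟨h1, h2⟩; exact ⟨⟨lt_of_le_of_lt ha0 h1, h2⟩, h1, h2.trans htb⟩
      rw [hset, integral_sub (hconstInt a t)
        (hu'int.mono_set ((Ioc_subset_Icc_self).trans (Icc_subset_Icc ha0 (htb.trans hb1)))),
        setIntegral_const, Real.volume_real_Ioc_of_le hta,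
        ← hdiff a t ha0 hta (htb.trans hb1)]
      abel
    have hvge : ∀ t : ℝ, b ≤ t → t ≤ 1 → v t = u t := by
      intro t htb ht1
      rw [hveq t (ha0.trans (hab.le.trans htb)) ht1]
      have hset : Ioc 0 t ∩ Ioc a b = Ioc a b := by
        ext s; simp only [mem_inter_iff, mem_Ioc]
        constructor
        · rintro ⟨_, h⟩; exact h
        · rintro ⟨h1, h2⟩; exact ⟨⟨lt_of_le_of_lt ha0 h1, h2.trans htb⟩, h1, h2⟩
      rw [hset, hIab0, add_zero]
    -- admissibility of v
    have hadm : Admissible n O p q v v' := by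
      refine ⟨⟨?_, ?_, ?_⟩, ?_, ?_, ?_⟩
      · -- continuity
        have h : ContinuousOn (fun x => ∫ s in (0:ℝ)..x, v' s) (uIcc (0:ℝ) 1) := by
          apply intervalIntegral.continuousOn_primitive_interval
          rwa [uIcc_of_le zero_le_one]
        rw [uIcc_of_le zero_le_one] at h
        exact continuousOn_const.add h
      · -- Memℒp
        exact hu'L2.add (((memLp_const m).sub hu'L2).indicator measurableSet_Ioc)
      · intro t ht
        have hv0 : v 0 = u 0 := by rw [hv]; simp
        rw [hv0, hv]
      · rw [hvle 0 le_rfl ha0, hu0]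
      · rw [hvge 1 hb1 le_rfl, hu1]
      · intro t ht
        rcases le_or_gt t a with hta | hta
        · rw [hvle t ht.1 hta]; exact huO t ht
        rcases le_or_gt b t with htb | htb
        · rw [hvge t htb ht.2]; exact huO t ht
        -- middle: chord point
        intro hmem
        have hvt : v t = u a + (t - a) • m := hvmid t hta.le htb.le
        have hclos : v t ∈ closure O := subset_closure hmem
        have hle : dist (u a) (v t) < ρ := by
          have h1 : dist (u a) (v t) = ‖(t - a) • m‖ := by
            rw [hvt, dist_eq_norm]; simp
          have h2 : ‖(t - a) • m‖ = (t - a) * ((b - a)⁻¹ * ‖u b - u a‖) := by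
            rw [norm_smul, hm, norm_smul, Real.norm_eq_abs, Real.norm_eq_abs,
              abs_of_nonneg (sub_nonneg.mpr hta.le), abs_of_nonneg (inv_nonneg.mpr hba.le)]
          have h3 : (t - a) * ((b - a)⁻¹ * ‖u b - u a‖) ≤ ‖u b - u a‖ := by
            have h4 : (t - a) * (b - a)⁻¹ ≤ 1 := by
              rw [← div_eq_mul_inv, div_le_one hba]; linarith
            have h5 : (0:ℝ) ≤ ‖u b - u a‖ := norm_nonneg _
            calc (t - a) * ((b - a)⁻¹ * ‖u b - u a‖)
                = ((t - a) * (b - a)⁻¹) * ‖u b - u a‖ := by ring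
              _ ≤ 1 * ‖u b - u a‖ := mul_le_mul_of_nonneg_right h4 h5
              _ = ‖u b - u a‖ := one_mul _
          have h6 : ‖u b - u a‖ = dist (u b) (u a) := (dist_eq_norm _ _).symm
          rw [h1, h2]
          exact lt_of_le_of_lt (h6 ▸ h3) hdist
        have := hρ a ⟨hca, hab.le.trans hbd⟩ (v t) hclos
        linarith [hle, this]
    -- energy comparison
    have hE := hmin v v' hadm
    have hmono : ∀ {s₁ s₂ : Set ℝ}, s₁ ⊆ s₂ → IntegrableOn (fun t => ‖u' t‖^2) s₂ →
        IntegrableOn (fun t => ‖u' t‖^2) s₁ := fun h hi => hi.mono_set h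
    have hsq_ab : IntegrableOn (fun t => ‖u' t‖^2) (Ioc a b) :=
      hnsq.mono_set (Ioc_subset_Icc_self.trans (Icc_subset_Icc ha0 hb1))
    have hEv : energy n v' = energy n u' + ((b - a) * ‖m‖^2 - ∫ s in Ioc a b, ‖u' s‖^2) := by
      have hpt : ∀ t : ℝ, ‖v' t‖^2 = ‖u' t‖^2 + (Ioc a b).indicator (fun s => ‖m‖^2 - ‖u' s‖^2) t := by
        intro t
        by_cases htab : t ∈ Ioc a b
        · have h1 : v' t = m := by
            simp only [hv', hw]
            rw [indicator_of_mem htab]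
            abel
          rw [h1, indicator_of_mem htab]
          ring
        · have h1 : v' t = u' t := by
            simp only [hv', hw]
            rw [indicator_of_notMem htab, add_zero]
          rw [h1, indicator_of_notMem htab, add_zero]
      have hind : IntegrableOn ((Ioc a b).indicator (fun s => ‖m‖^2 - ‖u' s‖^2)) (Ioc 0 1) :=
        IntegrableOn.mono_set
          (((integrable_const _).sub hnsq).indicator measurableSet_Ioc) Ioc_subset_Icc_self
      have hsq01 : IntegrableOn (fun t => ‖u' t‖^2) (Ioc (0:ℝ) 1) :=
        hnsq.mono_set Ioc_subset_Icc_self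
      have h1 : energy n v' = ∫ t in Ioc (0:ℝ) 1, ‖v' t‖^2 := by
        simp only [energy]
        rw [intervalIntegral.integral_of_le zero_le_one]
      have h2 : energy n u' = ∫ t in Ioc (0:ℝ) 1, ‖u' t‖^2 := by
        simp only [energy]
        rw [intervalIntegral.integral_of_le zero_le_one]
      rw [h1, h2]
      have h3 : ∫ t in Ioc (0:ℝ) 1, ‖v' t‖^2
          = (∫ t in Ioc (0:ℝ) 1, ‖u' t‖^2)
            + ∫ t in Ioc (0:ℝ) 1, (Ioc a b).indicator (fun s => ‖m‖^2 - ‖u' s‖^2) t := by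
        rw [← integral_add hsq01 hind]
        exact integral_congr_ae (Filter.Eventually.of_forall (fun t => hpt t))
      rw [h3, setIntegral_indicator measurableSet_Ioc]
      have hset : Ioc (0:ℝ) 1 ∩ Ioc a b = Ioc a b := by
        apply inter_eq_self_of_subset_right
        intro s hs
        exact ⟨lt_of_le_of_lt ha0 hs.1, hs.2.trans hb1⟩
      rw [hset, integral_sub (integrableOn_const (C := ‖m‖^2) (s := Ioc a b) (μ := volume) (by simp [Real.volume_Ioc])) hsq_ab,
        setIntegral_const, Real.volume_real_Ioc_of_le hab.le]
      simp only [smul_eq_mul]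
    have hEineq : ∫ s in Ioc a b, ‖u' s‖^2 ≤ (b - a) * ‖m‖^2 := by
      rw [hEv] at hE; linarith
    -- expansion of ∫ ‖u' - m‖²
    have hu'ab : IntegrableOn u' (Ioc a b) :=
      hu'int.mono_set (Ioc_subset_Icc_self.trans (Icc_subset_Icc ha0 hb1))
    have hinner : ∫ s in Ioc a b, ⟪m, u' s⟫ = (b - a) * ‖m‖^2 := by
      rw [integral_inner hu'ab m, hIab, ← hsmul, real_inner_smul_right,
        real_inner_self_eq_norm_sq]
    have hinnerInt : IntegrableOn (fun s => ⟪m, u' s⟫) (Ioc a b) := hu'ab.const_inner m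
    have hsqdiff : IntegrableOn (fun s => ‖u' s - m‖^2) (Ioc a b) := by
      have h := (hu'L2.sub (memLp_const m)).integrable_norm_rpow
        (by norm_num) (by norm_num)
      have h2 : IntegrableOn (fun s => ‖u' s - m‖^2) (Icc (0:ℝ) 1) := by
        simpa [ENNReal.toReal_ofNat, Real.rpow_natCast, IntegrableOn] using h
      exact h2.mono_set (Ioc_subset_Icc_self.trans (Icc_subset_Icc ha0 hb1))
    have hexp : ∫ s in Ioc a b, ‖u' s - m‖^2
        = (∫ s in Ioc a b, ‖u' s‖^2) - (b - a) * ‖m‖^2 := by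
      have hpt : ∀ s : ℝ, ‖u' s - m‖^2 = ‖u' s‖^2 - 2 * ⟪m, u' s⟫ + ‖m‖^2 := by
        intro s
        rw [norm_sub_sq_real, real_inner_comm]
      have h1 : ∫ s in Ioc a b, ‖u' s - m‖^2
          = ∫ s in Ioc a b, (‖u' s‖^2 - 2 * ⟪m, u' s⟫ + ‖m‖^2) :=
        integral_congr_ae (Filter.Eventually.of_forall (fun s => hpt s))
      have hf2 : Integrable (fun s => 2 * ⟪m, u' s⟫) (volume.restrict (Ioc a b)) := by
        exact hinnerInt.const_mul 2
      have hf12 : Integrable (fun s => ‖u' s‖^2 - 2 * ⟪m, u' s⟫) (volume.restrict (Ioc a b)) := by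
        exact hsq_ab.sub hf2
      have hcst : Integrable (fun _ : ℝ => ‖m‖^2) (volume.restrict (Ioc a b)) :=
        integrableOn_const (by simp [Real.volume_Ioc])
      rw [h1, integral_add hf12 hcst, integral_sub hsq_ab hf2, integral_const_mul, hinner,
        setIntegral_const, Real.volume_real_Ioc_of_le hab.le, smul_eq_mul]
      ring
    have hzero : ∫ s in Ioc a b, ‖u' s - m‖^2 = 0 := by
      have hge : 0 ≤ ∫ s in Ioc a b, ‖u' s - m‖^2 :=
        integral_nonneg (fun s => sq_nonneg _)
      have hle : ∫ s in Ioc a b, ‖u' s - m‖^2 ≤ 0 := by rw [hexp]; linarith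
      linarith
    have hae := (integral_eq_zero_iff_of_nonneg (fun s => sq_nonneg _) hsqdiff).mp hzero
    filter_upwards [hae] with t ht
    have : ‖u' t - m‖^2 = 0 := ht
    have h2 : u' t - m = 0 := by
      have := pow_eq_zero_iff (n := 2) (by norm_num) |>.mp this
      exact norm_eq_zero.mp this
    rw [← sub_eq_zero]; exact h2
  -- uniform continuity: choose δ
  have hucOn : UniformContinuousOn u (Icc c d) :=
    isCompact_Icc.uniformContinuousOn_of_continuous (hucont.mono hsub)
  obtain ⟨δ, hδpos, hδ⟩ := Metric.uniformContinuousOn_iff.mp hucOn ρ hρpos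
  -- choose N and step size s0
  obtain ⟨N, hNgt⟩ := exists_nat_gt ((d - c) / δ)
  have hNpos : 0 < (N:ℝ) := lt_of_le_of_lt (div_nonneg (sub_nonneg.mpr hcd.le) hδpos.le) hNgt
  set s0 : ℝ := (d - c) / N with hs0
  have hs0pos : 0 < s0 := div_pos (sub_pos.mpr hcd) hNpos
  have hs0δ : s0 < δ := by
    rw [hs0, div_lt_iff₀ hNpos]
    calc d - c < ↑N * δ := (div_lt_iff₀ hδpos).mp hNgt
    _ = δ * N := mul_comm _ _
  have hNs : c + N * s0 = d := by rw [hs0]; field_simp; ring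
  -- key applied to intervals of length s0
  have keyI : ∀ x : ℝ, c ≤ x → x + s0 ≤ d →
      (∀ᵐ t ∂(volume.restrict (Ioc x (x + s0))), u' t = s0⁻¹ • (u (x + s0) - u x)) := by
    intro x hcx hxd
    have hx2 : x ∈ Icc c d := ⟨hcx, by linarith⟩
    have hx3 : x + s0 ∈ Icc c d := ⟨by linarith, hxd⟩
    have hdist : dist (u (x + s0)) (u x) < ρ := by
      apply hδ _ hx3 _ hx2
      rw [Real.dist_eq]
      rw [abs_of_nonneg (by linarith)]
      simpa using hs0δ
    have h := key x (x + s0) hcx (by linarith) hxd hdist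
    simpa using h
  set m0 : EuclideanSpace ℝ (Fin n) := s0⁻¹ • (u (c + s0) - u c) with hm0
  -- equal constants on overlapping sets
  have hconst : ∀ (x y : ℝ) (m₁ m₂ : EuclideanSpace ℝ (Fin n)), x < y →
      (∀ᵐ t ∂(volume.restrict (Ioc x y)), u' t = m₁) →
      (∀ᵐ t ∂(volume.restrict (Ioc x y)), u' t = m₂) → m₁ = m₂ := by
    intro x y m₁ m₂ hxy h1 h2
    have hne : volume.restrict (Ioc x y) ≠ 0 := by
      simp only [ne_eq, Measure.restrict_eq_zero, Real.volume_Ioc,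
        ENNReal.ofReal_eq_zero, not_le]
      linarith
    haveI : (ae (volume.restrict (Ioc x y))).NeBot := ae_neBot.mpr hne
    obtain ⟨t, ht1, ht2⟩ := (h1.and h2).exists
    rw [← ht1, ← ht2]
  -- all block constants equal m0
  have hblock : ∀ j : ℕ, (j:ℝ) + 1 ≤ N →
      (∀ᵐ t ∂(volume.restrict (Ioc (c + j * s0) (c + j * s0 + s0))), u' t = m0) := by
    intro j
    induction j with
    | zero =>
      intro _
      have h := keyI c le_rfl (by nlinarith)
      simpa [hm0] using h
    | succ j ih =>
      intro hj1
      push_cast at hj1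
      have hjN : (j:ℝ) + 1 ≤ N := by linarith
      have ihh := ih (by push_cast; linarith)
      -- notation
      set x2 : ℝ := c + ((j:ℝ) + 1) * s0 with hx2
      set xm : ℝ := c + (j:ℝ) * s0 + s0 / 2 with hxm
      have hj0 : (0:ℝ) ≤ (j:ℝ) := Nat.cast_nonneg j
      have hB := keyI x2 (by rw [hx2]; nlinarith) (by rw [hx2]; nlinarith)
      have hM := keyI xm (by rw [hxm]; nlinarith) (by rw [hxm]; nlinarith)
      -- overlap 1 : Ioc xm (c + j*s0 + s0)
      have hov1a : Ioc xm (c + (j:ℝ) * s0 + s0) ⊆ Ioc (c + (j:ℝ) * s0) (c + (j:ℝ) * s0 + s0) :=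
        Ioc_subset_Ioc_left (by rw [hxm]; linarith)
      have hov1b : Ioc xm (c + (j:ℝ) * s0 + s0) ⊆ Ioc xm (xm + s0) :=
        Ioc_subset_Ioc_right (by rw [hxm]; linarith)
      have hMm0 : s0⁻¹ • (u (xm + s0) - u xm) = m0 := by
        refine (hconst xm (c + (j:ℝ) * s0 + s0) _ _ (by rw [hxm]; linarith) ?_ ?_).symm.symm
        · exact ae_restrict_of_ae_restrict_of_subset hov1b hM
        · exact ae_restrict_of_ae_restrict_of_subset hov1a ihh
      -- overlap 2 : Ioc x2 (xm + s0)
      have hov2a : Ioc x2 (xm + s0) ⊆ Ioc xm (xm + s0) :=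
        Ioc_subset_Ioc_left (by rw [hxm, hx2]; linarith)
      have hov2b : Ioc x2 (xm + s0) ⊆ Ioc x2 (x2 + s0) :=
        Ioc_subset_Ioc_right (by rw [hxm, hx2]; linarith)
      have hBm : s0⁻¹ • (u (x2 + s0) - u x2) = s0⁻¹ • (u (xm + s0) - u xm) := by
        refine hconst x2 (xm + s0) _ _ (by rw [hxm, hx2]; linarith) ?_ ?_
        · exact ae_restrict_of_ae_restrict_of_subset hov2b hB
        · exact ae_restrict_of_ae_restrict_of_subset hov2a hM
      have hfin : s0⁻¹ • (u (x2 + s0) - u x2) = m0 := hBm.trans hMm0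
      have hgoal : (∀ᵐ t ∂(volume.restrict (Ioc x2 (x2 + s0))), u' t = m0) := by
        filter_upwards [hB] with t ht
        rw [ht, hfin]
      have hcast : c + ((j:ℕ)+1 : ℕ) * s0 = x2 := by rw [hx2]; push_cast; ring
      have hcast2 : c + ((j:ℕ)+1 : ℕ) * s0 + s0 = x2 + s0 := by rw [← hcast]
      rw [hcast]
      exact hgoal
  -- glue the blocks : u' = m0 a.e. on Ioc c (c + j*s0)
  have hglob : ∀ j : ℕ, (j:ℝ) ≤ N →
      (∀ᵐ t ∂(volume.restrict (Ioc c (c + j * s0))), u' t = m0) := by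
    intro j
    induction j with
    | zero =>
      intro _
      have : Ioc c (c + (0:ℕ) * s0) = ∅ := by simp
      rw [this, Measure.restrict_empty]
      simp
    | succ j ih =>
      intro hj1
      push_cast at hj1
      have hjN : (j:ℝ) ≤ N := by linarith
      have hj0 : (0:ℝ) ≤ (j:ℝ) := Nat.cast_nonneg j
      have hA := ih hjN
      have hBlk := hblock j (by linarith)
      have hcast : c + ((j:ℕ)+1 : ℕ) * s0 = c + (j:ℝ) * s0 + s0 := by push_cast; ring
      rw [hcast]
      have hun : Ioc c (c + (j:ℝ) * s0 + s0)
          = Ioc c (c + (j:ℝ) * s0) ∪ Ioc (c + (j:ℝ) * s0) (c + (j:ℝ) * s0 + s0) :=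
        (Ioc_union_Ioc_eq_Ioc (by nlinarith) (by nlinarith)).symm
      rw [hun]
      have hsum : ∀ᵐ t ∂(volume.restrict (Ioc c (c + (j:ℝ) * s0))
          + volume.restrict (Ioc (c + (j:ℝ) * s0) (c + (j:ℝ) * s0 + s0))), u' t = m0 :=
        ae_add_measure_iff.mpr ⟨hA, hBlk⟩
      exact hsum.filter_mono (ae_mono (Measure.restrict_union_le _ _))
  have hIocd : ∀ᵐ t ∂(volume.restrict (Ioc c d)), u' t = m0 := by
    have h := hglob N le_rfl
    rwa [hNs] at h
  -- conclude
  intro t ht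
  have ht1 : t ≤ 1 := ht.2.trans hd1
  have h1 : u t - u c = ∫ s in Ioc c t, u' s := hdiff c t hc0 ht.1 ht1
  have haet : ∀ᵐ s ∂(volume.restrict (Ioc c t)), u' s = m0 :=
    ae_restrict_of_ae_restrict_of_subset (Ioc_subset_Ioc_right ht.2) hIocd
  have h2 : ∫ s in Ioc c t, u' s = (t - c) • m0 := by
    rw [integral_congr_ae haet, setIntegral_const,
      Real.volume_real_Ioc_of_le ht.1]
  have h3 : u d - u c = (d - c) • m0 := by
    rw [hdiff c d hc0 hcd.le hd1, integral_congr_ae hIocd, setIntegral_const,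
      Real.volume_real_Ioc_of_le hcd.le]
  rw [h3, smul_smul, div_mul_cancel₀ _ (sub_ne_zero.mpr hcd.ne')]
  have : u t - u c = (t - c) • m0 := h1.trans h2
  rw [← this]
  abel
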